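/- arXiv:0902.0582 — 6 statements merged into one kernel-verified Lean document; each statement's English description precedes it below -/
import Mathlib

section
/- Let Z_0 and Z_1 be real-valued random variables. Suppose there exist positive constants σ_0, σ_1, c_0, c_1 such that for i = 0, 1 and any t in [0, 1/c_i), log E[exp(t Z_i)] ≤ (σ_i t)² / (1 − c_i t). Then for any t in [0, 1/(c_0 + c_1)), log E[exp(t (Z_0 + Z_1))] ≤ ((σ_0 + σ_1) t)² / (1 − (c_0 + c_1) t). -/
/-!
Hölder's inequality with exponents `1/a` and `1/(1 - a)` gives
`cgf (Z₀ + Z₁) t ≤ a · cgf Z₀ (t/a) + (1 - a) · cgf Z₁ (t/(1 - a))`, and the two sub-gamma bounds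
turn the right-hand side into `(σ₀ t)² / (a - c₀ t) + (σ₁ t)² / (1 - a - c₁ t)`. Choosing `a` so
that the two denominators are proportional to `σ₀` and `σ₁` (the equality case of Cauchy–Schwarz
for `σ₀²/x + σ₁²/y`) makes this exactly `((σ₀ + σ₁) t)² / (1 - (c₀ + c₁) t)`.
-/

open MeasureTheory ProbabilityTheory Real

section

variable {Ω : Type*} [MeasurableSpace Ω] {μ : Measure Ω} {X Y : Ω → ℝ}

lemma exp_mul_rpow_inv (t b x : ℝ) : exp (t * x) ^ b⁻¹ = exp (t / b * x) := by
  rw [← exp_mul]; ring_nf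

lemma memLp_exp_mul_of_integrable {t b : ℝ} (hb : 0 < b)
    (h : Integrable (fun ω ↦ exp (t / b * X ω)) μ) :
    MemLp (fun ω ↦ exp (t * X ω)) (ENNReal.ofReal b⁻¹) μ := by
  have hm : AEStronglyMeasurable (fun ω ↦ exp (t * X ω)) μ := by
    refine ((continuous_rpow_const hb.le).comp_aestronglyMeasurable
      h.aestronglyMeasurable).congr (ae_of_all _ fun ω ↦ ?_)
    simp only [← exp_mul_rpow_inv, ← rpow_mul (exp_pos _).le,
      inv_mul_cancel₀ hb.ne', rpow_one]
  rw [← integrable_norm_rpow_iff hm (by simpa using hb) ENNReal.ofReal_ne_top,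
    ENNReal.toReal_ofReal (inv_nonneg.2 hb.le)]
  simpa only [norm_of_nonneg (exp_pos _).le, exp_mul_rpow_inv] using h

lemma integrable_exp_mul_add {t a : ℝ} (ha₀ : 0 < a) (ha₁ : a < 1)
    (hX : Integrable (fun ω ↦ exp (t / a * X ω)) μ)
    (hY : Integrable (fun ω ↦ exp (t / (1 - a) * Y ω)) μ) :
    Integrable (fun ω ↦ exp (t * (X + Y) ω)) μ := by
  have := (Real.HolderConjugate.inv_one_sub_inv ha₀ ha₁).ennrealOfReal
  simpa only [Pi.add_apply, mul_add, exp_add, Pi.mul_def] using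
    (memLp_exp_mul_of_integrable ha₀ hX).integrable_mul
      (memLp_exp_mul_of_integrable (sub_pos.2 ha₁) hY)

lemma mgf_add_le_rpow_mul_rpow {t a : ℝ} (ha₀ : 0 < a) (ha₁ : a < 1)
    (hX : Integrable (fun ω ↦ exp (t / a * X ω)) μ)
    (hY : Integrable (fun ω ↦ exp (t / (1 - a) * Y ω)) μ) :
    mgf (X + Y) μ t ≤ mgf X μ (t / a) ^ a * mgf Y μ (t / (1 - a)) ^ (1 - a) := by
  simpa only [mgf, Pi.add_apply, mul_add, exp_add, exp_mul_rpow_inv, one_div, inv_inv] using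
    integral_mul_le_Lp_mul_Lq_of_nonneg (Real.HolderConjugate.inv_one_sub_inv ha₀ ha₁)
      (ae_of_all _ fun ω ↦ (exp_pos _).le) (ae_of_all _ fun ω ↦ (exp_pos _).le)
      (memLp_exp_mul_of_integrable ha₀ hX) (memLp_exp_mul_of_integrable (sub_pos.2 ha₁) hY)

lemma cgf_add_le [NeZero μ] {t a : ℝ} (ha₀ : 0 < a) (ha₁ : a < 1)
    (hX : Integrable (fun ω ↦ exp (t / a * X ω)) μ)
    (hY : Integrable (fun ω ↦ exp (t / (1 - a) * Y ω)) μ) :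
    cgf (X + Y) μ t ≤ a * cgf X μ (t / a) + (1 - a) * cgf Y μ (t / (1 - a)) := by
  have hXY := mgf_pos' (NeZero.ne μ) (integrable_exp_mul_add ha₀ ha₁ hX hY)
  have hX₀ := mgf_pos' (NeZero.ne μ) hX
  have hY₀ := mgf_pos' (NeZero.ne μ) hY
  calc cgf (X + Y) μ t
      ≤ log (mgf X μ (t / a) ^ a * mgf Y μ (t / (1 - a)) ^ (1 - a)) :=
        log_le_log hXY (mgf_add_le_rpow_mul_rpow ha₀ ha₁ hX hY)
    _ = a * cgf X μ (t / a) + (1 - a) * cgf Y μ (t / (1 - a)) := by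
        rw [log_mul (by positivity) (by positivity), log_rpow hX₀, log_rpow hY₀, cgf, cgf]

end

lemma mul_sq_div_one_sub_mul_div (σ c t : ℝ) {a : ℝ} (ha : a ≠ 0) :
    a * ((σ * (t / a)) ^ 2 / (1 - c * (t / a))) = (σ * t) ^ 2 / (a - c * t) := by
  rcases eq_or_ne (a - c * t) 0 with h | h
  · have : 1 - c * (t / a) = 0 := by field_simp; linarith
    simp [h, this]
  · field_simp

lemma sq_div_add_sq_div_eq {σ₀ σ₁ : ℝ} (hσ : σ₀ + σ₁ ≠ 0) (t : ℝ) {D : ℝ} (hD : D ≠ 0) :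
    (σ₀ * t) ^ 2 / (σ₀ * D / (σ₀ + σ₁)) + (σ₁ * t) ^ 2 / (σ₁ * D / (σ₀ + σ₁)) =
      ((σ₀ + σ₁) * t) ^ 2 / D := by
  field_simp

theorem stmt0 {Ω : Type*} [MeasurableSpace Ω] {μ : Measure Ω} [IsProbabilityMeasure μ]
    (Z₀ Z₁ : Ω → ℝ) (σ₀ σ₁ c₀ c₁ : ℝ)
    (hσ₀ : 0 < σ₀) (hσ₁ : 0 < σ₁) (hc₀ : 0 < c₀) (hc₁ : 0 < c₁)
    (hint₀ : ∀ t : ℝ, 0 ≤ t → t < 1 / c₀ → Integrable (fun ω => exp (t * Z₀ ω)) μ)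
    (hint₁ : ∀ t : ℝ, 0 ≤ t → t < 1 / c₁ → Integrable (fun ω => exp (t * Z₁ ω)) μ)
    (h₀ : ∀ t : ℝ, 0 ≤ t → t < 1 / c₀ →
      Real.log (∫ ω, exp (t * Z₀ ω) ∂μ) ≤ (σ₀ * t) ^ 2 / (1 - c₀ * t))
    (h₁ : ∀ t : ℝ, 0 ≤ t → t < 1 / c₁ →
      Real.log (∫ ω, exp (t * Z₁ ω) ∂μ) ≤ (σ₁ * t) ^ 2 / (1 - c₁ * t)) :
    ∀ t : ℝ, 0 ≤ t → t < 1 / (c₀ + c₁) →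
      Real.log (∫ ω, exp (t * (Z₀ ω + Z₁ ω)) ∂μ) ≤
        ((σ₀ + σ₁) * t) ^ 2 / (1 - (c₀ + c₁) * t) := by
  intro t ht htc
  set D := 1 - (c₀ + c₁) * t
  have hD : 0 < D := by rw [lt_div_iff₀ (by positivity)] at htc; linarith
  set a := c₀ * t + σ₀ * D / (σ₀ + σ₁)
  have ha₀ : a - c₀ * t = σ₀ * D / (σ₀ + σ₁) := by ring
  have ha₁ : 1 - a - c₁ * t = σ₁ * D / (σ₀ + σ₁) := by simp only [a, D]; field_simp; ring
  have hpos₀ : 0 < a - c₀ * t := ha₀ ▸ by positivity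
  have hpos₁ : 0 < 1 - a - c₁ * t := ha₁ ▸ by positivity
  have ha : 0 < a := by linarith [mul_nonneg hc₀.le ht]
  have ha' : 0 < 1 - a := by linarith [mul_nonneg hc₁.le ht]
  have ht₀ : 0 ≤ t / a ∧ t / a < 1 / c₀ :=
    ⟨div_nonneg ht ha.le, by rw [div_lt_div_iff₀ ha hc₀]; linarith⟩
  have ht₁ : 0 ≤ t / (1 - a) ∧ t / (1 - a) < 1 / c₁ :=
    ⟨div_nonneg ht ha'.le, by rw [div_lt_div_iff₀ ha' hc₁]; linarith⟩
  calc cgf (Z₀ + Z₁) μ t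
      ≤ a * cgf Z₀ μ (t / a) + (1 - a) * cgf Z₁ μ (t / (1 - a)) :=
        cgf_add_le ha (sub_pos.1 ha') (hint₀ _ ht₀.1 ht₀.2) (hint₁ _ ht₁.1 ht₁.2)
    _ ≤ a * ((σ₀ * (t / a)) ^ 2 / (1 - c₀ * (t / a))) +
        (1 - a) * ((σ₁ * (t / (1 - a))) ^ 2 / (1 - c₁ * (t / (1 - a)))) :=
        add_le_add (mul_le_mul_of_nonneg_left (h₀ _ ht₀.1 ht₀.2) ha.le)
          (mul_le_mul_of_nonneg_left (h₁ _ ht₁.1 ht₁.2) ha'.le)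
    _ = ((σ₀ + σ₁) * t) ^ 2 / D := by
        rw [mul_sq_div_one_sub_mul_div _ _ _ ha.ne',
          mul_sq_div_one_sub_mul_div _ _ _ ha'.ne', ha₀, ha₁,
          sq_div_add_sq_div_eq (by positivity) t hD.ne']
end

section
/- Suppose real random variables X_1, …, X_n satisfy log E[exp(t X_i)] ≤ σ_i² t² / (2(1 − t M)) for all t in [0, 1/M), where σ_i > 0 and M > 0. Set V_n = σ_1² + ⋯ + σ_n² and S_n = X_1 + ⋯ + X_n. Then for any x > 0, P(S_n ≥ √(2 V_n x) + M x) ≤ exp(−x). -/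
/-!
Chernoff's bound with the sub-gamma control of the log-Laplace transform gives, for every
admissible `t ≥ 0`, the tail bound `exp (-t a + V t² / (2 (1 - t M)))` at level `a`; by
independence the cumulant generating function of `S_n` is the sum of those of the `X_i`, so `V`
is additive. Writing `u = √(2 V x)`, the choice `t = u / (V + M u)` makes `1 - t M = V / (V + M u)`
and turns the exponent at level `a = u + M x` into exactly `-x`.
-/

open MeasureTheory Real Finset ProbabilityTheory

/-- The right tail of `X` is sub-gamma with variance factor `v` and scale parameter `c`. -/
def HasSubGammaCGF {Ω : Type*} [MeasurableSpace Ω] (X : Ω → ℝ) (μ : Measure Ω) (v c : ℝ) :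
    Prop :=
  ∀ t : ℝ, 0 ≤ t → t * c < 1 →
    Integrable (fun ω => exp (t * X ω)) μ ∧ cgf X μ t ≤ v * t ^ 2 / (2 * (1 - t * c))

theorem sub_gamma_exponent_eq {v c x u : ℝ} (hv : 0 < v) (hc : 0 ≤ c) (hu : 0 ≤ u)
    (hu2 : u ^ 2 = 2 * v * x) :
    -(u / (v + c * u)) * (u + c * x) + v * (u / (v + c * u)) ^ 2 / (2 * (1 - u / (v + c * u) * c))
      = -x := by
  have hd : 0 < v + c * u := by positivity
  have h1tc : 1 - u / (v + c * u) * c = v / (v + c * u) := by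
    field_simp; ring
  rw [h1tc]
  field_simp
  linear_combination -hu2

namespace HasSubGammaCGF

variable {Ω : Type*} [MeasurableSpace Ω] {μ : Measure Ω}

theorem measureReal_ge_le [IsFiniteMeasure μ] {X : Ω → ℝ} {v c : ℝ}
    (hX : HasSubGammaCGF X μ v c) (hv : 0 < v) (hc : 0 ≤ c) {x : ℝ} (hx : 0 ≤ x) :
    μ.real {ω | √(2 * v * x) + c * x ≤ X ω} ≤ exp (-x) := by
  set u := √(2 * v * x)
  have hd : 0 < v + c * u := by positivity
  set t := u / (v + c * u)
  have ht : 0 ≤ t := by positivity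
  have htc : t * c < 1 := by
    rw [div_mul_eq_mul_div, div_lt_one hd]
    linarith
  obtain ⟨hint, hcgf⟩ := hX t ht htc
  calc μ.real {ω | u + c * x ≤ X ω}
      ≤ exp (-t * (u + c * x) + cgf X μ t) := measure_ge_le_exp_cgf _ ht hint
    _ ≤ exp (-t * (u + c * x) + v * t ^ 2 / (2 * (1 - t * c))) := by gcongr
    _ = exp (-x) := by rw [sub_gamma_exponent_eq hv hc (sqrt_nonneg _) (sq_sqrt (by positivity))]

end HasSubGammaCGF

theorem ProbabilityTheory.iIndepFun.hasSubGammaCGF_sum {Ω ι : Type*} [MeasurableSpace Ω]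
    {μ : Measure Ω} {X : ι → Ω → ℝ} (hindep : iIndepFun X μ) (hmeas : ∀ i, Measurable (X i))
    {s : Finset ι} {v : ι → ℝ} {c : ℝ} (hX : ∀ i ∈ s, HasSubGammaCGF (X i) μ (v i) c) :
    HasSubGammaCGF (∑ i ∈ s, X i) μ (∑ i ∈ s, v i) c := by
  have : IsProbabilityMeasure μ := hindep.isProbabilityMeasure
  intro t ht htc
  have hint : ∀ i ∈ s, Integrable (fun ω => exp (t * X i ω)) μ := fun i hi => (hX i hi t ht htc).1
  refine ⟨hindep.integrable_exp_mul_sum hmeas hint, ?_⟩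
  rw [hindep.cgf_sum hmeas hint, sum_mul, sum_div]
  exact sum_le_sum fun i hi => (hX i hi t ht htc).2

theorem stmt2 {Ω : Type*} [MeasurableSpace Ω] {μ : Measure Ω} [IsProbabilityMeasure μ]
    (n : ℕ) (X : ℕ → Ω → ℝ) (σ : ℕ → ℝ) (M : ℝ) (hM : 0 < M)
    (hσ : ∀ i, 0 < σ i) (hmeas : ∀ i, Measurable (X i))
    (hindep : ProbabilityTheory.iIndepFun X μ)
    (hint : ∀ i, ∀ t : ℝ, 0 ≤ t → t < 1 / M → Integrable (fun ω => exp (t * X i ω)) μ)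
    (hlap : ∀ i, ∀ t : ℝ, 0 ≤ t → t < 1 / M →
      Real.log (∫ ω, exp (t * X i ω) ∂μ) ≤ σ i ^ 2 * t ^ 2 / (2 * (1 - t * M))) :
    ∀ x : ℝ, 0 < x →
      μ {ω | Real.sqrt (2 * (∑ i ∈ range n, σ i ^ 2) * x) + M * x
              ≤ ∑ i ∈ range n, X i ω}
        ≤ ENNReal.ofReal (exp (-x)) := by
  intro x hx
  rcases n.eq_zero_or_pos with rfl | hn
  · have hempty : {ω | √(2 * (∑ i ∈ range 0, σ i ^ 2) * x) + M * x ≤ ∑ i ∈ range 0, X i ω} = ∅ :=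
      Set.eq_empty_of_forall_notMem fun ω hω => by
        simp only [range_zero, sum_empty, mul_zero, zero_mul, sqrt_zero, zero_add,
          Set.mem_ofPred_eq] at hω
        nlinarith
    simp only [hempty, measure_empty, zero_le]
  have hV : 0 < ∑ i ∈ range n, σ i ^ 2 :=
    sum_pos (fun i _ => pow_pos (hσ i) 2) ⟨0, mem_range.mpr hn⟩
  have hX : ∀ i ∈ range n, HasSubGammaCGF (X i) μ (σ i ^ 2) M := fun i _ t ht htM => by
    rw [← lt_div_iff₀ hM] at htM
    exact ⟨hint i t ht htM, hlap i t ht htM⟩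
  have htail := (hindep.hasSubGammaCGF_sum hmeas hX).measureReal_ge_le hV hM.le hx.le
  simp only [Finset.sum_apply] at htail
  rw [ENNReal.le_ofReal_iff_toReal_le (measure_ne_top _ _) (exp_pos _).le]
  exact htail
end

section
/- Let X_1, …, X_n be independent centered real random variables each bounded in absolute value by M. Set V_n = Var(X_1) + ⋯ + Var(X_n) and S_n = X_1 + ⋯ + X_n. Then for any y > 0, P(S_n ≥ y) ≤ exp(−y² / (2 V_n + 2 y M)). -/
/-!
Chernoff's method. For `0 ≤ t < 1 / M`, comparing the exponential series of `t X` termwise with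
a geometric series gives `E[exp (t X)] ≤ 1 + Var(X) t² / (2 (1 - t M))` for each centered `X`
with `|X| ≤ M`. Bounding `1 + x ≤ exp x` and multiplying over the independent summands yields
`P(S ≥ y) ≤ exp (-t y + V t² / (2 (1 - t M)))`, and `t = y / (V + 2 y M)` turns the exponent
into `-y² / (2 V + 2 y M)`.
-/

open MeasureTheory ProbabilityTheory Real Finset
open scoped Nat

lemma Real.exp_le_one_add_add_sq_div_of_abs_le {u c : ℝ} (huc : |u| ≤ c) (hc : c < 1) :
    exp u ≤ 1 + u + u ^ 2 / (2 * (1 - c)) := by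
  have hc0 : 0 ≤ c := (abs_nonneg u).trans huc
  have hexp : HasSum (fun n ↦ u ^ (n + 2) / (n + 2)!) (exp u - (1 + u)) := by
    have hseries : HasSum (fun n ↦ u ^ n / n !) (exp u) :=
      Real.exp_eq_exp_ℝ ▸ NormedSpace.expSeries_div_hasSum_exp u
    simpa [Finset.sum_range_succ] using (hasSum_nat_add_iff' 2).mpr hseries
  have hgeom : HasSum (fun n ↦ u ^ 2 / 2 * c ^ n) (u ^ 2 / 2 * (1 - c)⁻¹) :=
    (hasSum_geometric_of_lt_one hc0 hc).mul_left _
  have hterm (n : ℕ) : u ^ (n + 2) / (n + 2)! ≤ u ^ 2 / 2 * c ^ n := by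
    have hfact : (2 : ℝ) ≤ (n + 2)! := by
      exact_mod_cast (Nat.factorial_le (by omega : 2 ≤ n + 2)).trans' (by simp)
    calc u ^ (n + 2) / (n + 2)! ≤ |u| ^ (n + 2) / (n + 2)! :=
          div_le_div_of_nonneg_right ((le_abs_self _).trans (abs_pow u _).le) (by positivity)
      _ = u ^ 2 * |u| ^ n / (n + 2)! := by rw [pow_add, ← sq_abs u]; ring
      _ ≤ u ^ 2 * c ^ n / 2 := by gcongr
      _ = u ^ 2 / 2 * c ^ n := by ring
  have := hasSum_le hterm hexp hgeom
  rw [← div_eq_mul_inv, div_div] at this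
  linarith

namespace ProbabilityTheory

variable {Ω : Type*} [MeasurableSpace Ω] {μ : Measure Ω} [IsProbabilityMeasure μ]

lemma mgf_le_exp_variance_mul_sq_div {X : Ω → ℝ} {M t : ℝ} (hX : AEMeasurable X μ)
    (hbdd : ∀ᵐ ω ∂μ, |X ω| ≤ M) (hcent : μ[X] = 0) (ht : 0 ≤ t) (htM : t * M < 1) :
    mgf X μ t ≤ exp (variance X μ * t ^ 2 / (2 * (1 - t * M))) := by
  set K := t ^ 2 / (2 * (1 - t * M))
  have hL2 : MemLp X 2 μ := memLp_of_bounded (a := -M) (b := M)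
    (hbdd.mono fun _ h ↦ abs_le.mp h) hX.aestronglyMeasurable 2
  have hquad : ∀ᵐ ω ∂μ, exp (t * X ω) ≤ 1 + t * X ω + X ω ^ 2 * K := by
    filter_upwards [hbdd] with ω hω
    have htX : |t * X ω| ≤ t * M := by
      rw [abs_mul, abs_of_nonneg ht]
      exact mul_le_mul_of_nonneg_left hω ht
    exact (exp_le_one_add_add_sq_div_of_abs_le htX htM).trans_eq (by ring)
  have hint_lin : Integrable (fun ω ↦ t * X ω) μ := (hL2.integrable one_le_two).const_mul t
  have hint_sq : Integrable (fun ω ↦ X ω ^ 2 * K) μ := hL2.integrable_sq.mul_const K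
  have hint_aff : Integrable (fun ω ↦ 1 + t * X ω) μ := (integrable_const 1).add hint_lin
  have hint_exp : Integrable (fun ω ↦ exp (t * X ω)) μ :=
    integrable_exp_mul_of_le t M ht hX (hbdd.mono fun _ h ↦ (le_abs_self _).trans h)
  calc mgf X μ t ≤ ∫ ω, (1 + t * X ω + X ω ^ 2 * K) ∂μ :=
        integral_mono_ae hint_exp (hint_aff.add hint_sq) hquad
    _ = variance X μ * K + 1 := by
        rw [integral_add hint_aff hint_sq,
          integral_add (integrable_const 1) hint_lin, integral_const_mul, integral_mul_const,
          variance_of_integral_eq_zero hX hcent]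
        simp only [integral_const, probReal_univ, smul_eq_mul, mul_one, hcent, mul_zero, add_zero]
        ring
    _ ≤ exp (variance X μ * K) := add_one_le_exp _
    _ = exp (variance X μ * t ^ 2 / (2 * (1 - t * M))) := by rw [mul_div_assoc]

lemma iIndepFun.measureReal_sum_ge_le_exp {ι : Type*} {X : ι → Ω → ℝ} {M t : ℝ}
    (hindep : iIndepFun X μ) (hmeas : ∀ i, Measurable (X i))
    (hbdd : ∀ i, ∀ᵐ ω ∂μ, |X i ω| ≤ M) (hcent : ∀ i, μ[X i] = 0) (ht : 0 ≤ t)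
    (htM : t * M < 1) (s : Finset ι) (y : ℝ) :
    μ.real {ω | y ≤ ∑ i ∈ s, X i ω}
      ≤ exp (-t * y + (∑ i ∈ s, variance (X i) μ) * t ^ 2 / (2 * (1 - t * M))) := by
  have hint : Integrable (fun ω ↦ exp (t * (∑ i ∈ s, X i) ω)) μ :=
    hindep.integrable_exp_mul_sum hmeas fun i _ ↦ integrable_exp_mul_of_le t M ht
      (hmeas i).aemeasurable ((hbdd i).mono fun _ h ↦ (le_abs_self _).trans h)
  have hmgf : mgf (∑ i ∈ s, X i) μ t
      ≤ exp ((∑ i ∈ s, variance (X i) μ) * t ^ 2 / (2 * (1 - t * M))) := by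
    rw [hindep.mgf_sum hmeas, Finset.sum_mul, Finset.sum_div, exp_sum]
    exact Finset.prod_le_prod (fun _ _ ↦ mgf_nonneg) fun i _ ↦
      mgf_le_exp_variance_mul_sq_div (hmeas i).aemeasurable (hbdd i) (hcent i) ht htM
  calc μ.real {ω | y ≤ ∑ i ∈ s, X i ω} = μ.real {ω | y ≤ (∑ i ∈ s, X i) ω} := by
        simp only [Finset.sum_apply]
    _ ≤ exp (-t * y) * mgf (∑ i ∈ s, X i) μ t := measure_ge_le_exp_mul_mgf y ht hint
    _ ≤ exp (-t * y) * exp ((∑ i ∈ s, variance (X i) μ) * t ^ 2 / (2 * (1 - t * M))) := by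
        gcongr
    _ = _ := (exp_add _ _).symm

end ProbabilityTheory

theorem stmt3 {Ω : Type*} [MeasurableSpace Ω] {μ : Measure Ω} [IsProbabilityMeasure μ]
    (n : ℕ) (X : ℕ → Ω → ℝ) (M : ℝ) (hM : 0 < M)
    (hmeas : ∀ i, Measurable (X i))
    (hindep : iIndepFun X μ)
    (hbdd : ∀ i, ∀ᵐ ω ∂μ, |X i ω| ≤ M)
    (hcent : ∀ i, ∫ ω, X i ω ∂μ = 0) :
    ∀ y : ℝ, 0 < y →
      μ {ω | y ≤ ∑ i ∈ range n, X i ω}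
        ≤ ENNReal.ofReal
            (exp (-(y ^ 2) / (2 * (∑ i ∈ range n, variance (X i) μ) + 2 * y * M))) := by
  intro y hy
  set V := ∑ i ∈ range n, variance (X i) μ
  have hV : 0 ≤ V := sum_nonneg fun i _ ↦ variance_nonneg _ _
  -- Unlike the usual `y / (V + y M)`, this `t` stays below `1 / M` when `V = 0`.
  set t := y / (V + 2 * y * M)
  have hD : 0 < V + 2 * y * M := by positivity
  have hone_sub : 1 - t * M = (V + y * M) / (V + 2 * y * M) := by
    simp only [t]
    field_simp
    ring
  have htM : t * M < 1 := by
    have : 0 < 1 - t * M := hone_sub ▸ by positivity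
    linarith
  have hexponent : -t * y + V * t ^ 2 / (2 * (1 - t * M)) = -(y ^ 2) / (2 * V + 2 * y * M) := by
    rw [hone_sub]
    simp only [t]
    field_simp
    ring
  rw [← ENNReal.ofReal_toReal (measure_ne_top μ _)]
  exact ENNReal.ofReal_le_ofReal <| hexponent ▸
    hindep.measureReal_sum_ge_le_exp hmeas hbdd hcent (by positivity) htM (range n) y
end

section
/- The function g defined on the reals by g(x) = x⁻²(eˣ − x − 1) for x ≠ 0 and g(0) = 1/2 is increasing on ℝ. -/
/-!
On writing `g(x) = ∫₀¹ (1 - t) e^{tx} dt` (for `x ≠ 0` through an explicit antiderivative, and at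
`0` directly), `g` becomes an average of the increasing functions `x ↦ e^{tx}` against the positive
weight `1 - t`, hence strictly increasing.
-/

open Real Set intervalIntegral

theorem strictMono_integral_mul_exp_mul {w : ℝ → ℝ} {b : ℝ} (hw : ContinuousOn w (Icc 0 b))
    (hw_nonneg : ∀ t ∈ Ioc 0 b, 0 ≤ w t) (hw_pos : ∃ t ∈ Ioc 0 b, 0 < w t) :
    StrictMono fun x => ∫ t in 0..b, w t * exp (t * x) := by
  obtain ⟨c, hc, hwc⟩ := hw_pos
  intro x y hxy
  have hcont (z : ℝ) : ContinuousOn (fun t => w t * exp (t * z)) (Icc 0 b) :=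
    hw.mul (by fun_prop)
  refine integral_lt_integral_of_continuousOn_of_le_of_exists_lt (hc.1.trans_le hc.2)
    (hcont x) (hcont y) (fun t ht => ?_) ⟨c, Ioc_subset_Icc_self hc, ?_⟩
  · exact mul_le_mul_of_nonneg_left (exp_le_exp.2 (by nlinarith [ht.1])) (hw_nonneg t ht)
  · exact mul_lt_mul_of_pos_left (exp_lt_exp.2 (by nlinarith [hc.1])) hwc

theorem hasDerivAt_one_sub_mul_exp_mul_antideriv {x : ℝ} (hx : x ≠ 0) (t : ℝ) :
    HasDerivAt (fun t => ((1 - t) / x + 1 / x ^ 2) * exp (t * x)) ((1 - t) * exp (t * x)) t := by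
  have h := ((((hasDerivAt_id' t).const_sub 1).div_const x).add_const (1 / x ^ 2)).fun_mul
    (hasDerivAt_mul_const x).exp
  refine h.congr_deriv ?_
  field_simp
  ring

theorem integral_one_sub_mul_exp_mul {x : ℝ} (hx : x ≠ 0) :
    ∫ t in (0 : ℝ)..1, (1 - t) * exp (t * x) = x⁻¹ ^ 2 * (exp x - x - 1) := by
  rw [integral_eq_sub_of_hasDerivAt (fun t _ => hasDerivAt_one_sub_mul_exp_mul_antideriv hx t)
    (by apply Continuous.intervalIntegrable; fun_prop)]
  simp only [sub_self, zero_div, one_div, zero_add, one_mul, sub_zero, zero_mul, exp_zero,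
    mul_one, inv_pow]
  field_simp
  ring

theorem integral_one_sub_mul_exp_mul_zero :
    ∫ t in (0 : ℝ)..1, (1 - t) * exp (t * 0) = 1 / 2 := by
  simp only [mul_zero, exp_zero, mul_one]
  rw [integral_sub (by simp) (by simp)]
  norm_num [integral_id]

theorem stmt4 :
    StrictMono (fun x : ℝ => if x = 0 then 1 / 2 else x⁻¹ ^ 2 * (exp x - x - 1)) := by
  have h_integral : (fun x : ℝ => if x = 0 then 1 / 2 else x⁻¹ ^ 2 * (exp x - x - 1)) =
      fun x => ∫ t in (0 : ℝ)..1, (1 - t) * exp (t * x) := by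
    ext x
    split_ifs with hx
    · rw [hx, integral_one_sub_mul_exp_mul_zero]
    · rw [integral_one_sub_mul_exp_mul hx]
  rw [h_integral]
  exact strictMono_integral_mul_exp_mul (by fun_prop) (fun t ht => by linarith [ht.2])
    ⟨1 / 2, by norm_num, by norm_num⟩
end

section
/- Let Y_1, …, Y_p be real-valued random variables each almost surely bounded in absolute value by M. For i ≥ 2, let Y_i* be a random variable independent of σ(Y_1, …, Y_{i−1}) with the same distribution as Y_i. Then for any real t, |E[exp(t Σ_{i=1}^p Y_i)] − Π_{i=1}^p E[exp(t Y_i)]| ≤ |t| exp(|t| M p) Σ_{i=2}^p E|Y_i − Y_i*|. -/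
open MeasureTheory ProbabilityTheory Real Finset

/-!
Write `S n = Y 1 + ⋯ + Y n`. Replacing `Y (n+1)` by its copy `Y* (n+1)`, which is independent
of `S n`, does not change `E[exp (t Y (n+1))]` and makes `exp (t S n)` and `exp (t Y* (n+1))`
uncorrelated, so by the Lipschitz bound for `exp` on `[-|t| M (n+1), |t| M (n+1)]`
  `|E[exp (t S (n+1))] - E[exp (t S n)] E[exp (t Y (n+1))]|`
  `≤ |t| exp (|t| M (n+1)) E|Y (n+1) - Y* (n+1)|`.
Induction on `n`, using `|E[exp (t Y (n+1))]| ≤ exp (|t| M)`, accumulates these errors.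
-/

lemma abs_exp_sub_exp_le_of_abs_le {x y C : ℝ} (hx : |x| ≤ C) (hy : |y| ≤ C) :
    |exp x - exp y| ≤ |x - y| * exp C := by
  wlog h : y ≤ x generalizing x y
  · rw [abs_sub_comm, abs_sub_comm x y]
    exact this hy hx (le_of_not_ge h)
  have hexp : exp y ≤ exp x := exp_le_exp.2 h
  rw [abs_of_nonneg (sub_nonneg.2 hexp), abs_of_nonneg (sub_nonneg.2 h)]
  have hyx : exp y = exp x * exp (y - x) := by rw [← exp_add, add_sub_cancel]
  have hxC : exp x ≤ exp C := exp_le_exp.2 ((le_abs_self x).trans hx)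
  nlinarith [add_one_le_exp (y - x), exp_pos x, sub_nonneg.2 h]

lemma abs_mul_le_abs_mul_of_abs_le {t x C : ℝ} (h : |x| ≤ C) : |t * x| ≤ |t| * C := by
  rw [abs_mul]
  exact mul_le_mul_of_nonneg_left h (abs_nonneg t)

section

variable {Ω : Type*} [MeasurableSpace Ω] {μ : Measure Ω}

lemma ae_abs_sum_le {ι : Type*} {s : Finset ι} {Y : ι → Ω → ℝ} {M : ℝ}
    (h : ∀ i ∈ s, ∀ᵐ ω ∂μ, |Y i ω| ≤ M) : ∀ᵐ ω ∂μ, |∑ i ∈ s, Y i ω| ≤ #s * M := by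
  filter_upwards [s.eventually_all.2 h] with ω hω
  calc |∑ i ∈ s, Y i ω| ≤ ∑ i ∈ s, |Y i ω| := abs_sum_le_sum_abs _ _
    _ ≤ #s • M := sum_le_card_nsmul _ _ _ hω
    _ = #s * M := nsmul_eq_mul _ _

lemma indepFun_sum_of_indep_iSup {ι : Type*} {s : Finset ι} {Y : ι → Ω → ℝ} {Z : Ω → ℝ}
    (h : Indep (⨆ j ∈ s, MeasurableSpace.comap (Y j) inferInstance)
      (MeasurableSpace.comap Z inferInstance) μ) :
    IndepFun (fun ω ↦ ∑ j ∈ s, Y j ω) Z μ := by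
  rw [IndepFun_iff_Indep]
  refine indep_of_indep_of_le_left h (Measurable.comap_le ?_)
  exact Finset.measurable_sum _ fun j hj ↦
    Measurable.of_comap_le (le_iSup₂ (f := fun j (_ : j ∈ s) ↦
      MeasurableSpace.comap (Y j) inferInstance) j hj)

variable [IsProbabilityMeasure μ]

lemma integrable_exp_mul_of_ae_abs_le {X : Ω → ℝ} {C : ℝ} (hX : AEMeasurable X μ)
    (h : ∀ᵐ ω ∂μ, |X ω| ≤ C) (t : ℝ) : Integrable (fun ω ↦ exp (t * X ω)) μ :=
  integrable_exp_mul_of_mem_Icc hX (h.mono fun _ hω ↦ abs_le.1 hω)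

lemma abs_mgf_le_of_ae_abs_le {X : Ω → ℝ} {C : ℝ} (h : ∀ᵐ ω ∂μ, |X ω| ≤ C) (t : ℝ) :
    |mgf X μ t| ≤ exp (|t| * C) := by
  have hbound : ∀ᵐ ω ∂μ, ‖exp (t * X ω)‖ ≤ exp (|t| * C) := by
    filter_upwards [h] with ω hω
    rw [norm_of_nonneg (exp_pos _).le]
    exact exp_le_exp.2 ((le_abs_self _).trans (abs_mul_le_abs_mul_of_abs_le hω))
  simpa [mgf] using norm_integral_le_of_norm_le_const hbound

lemma abs_mgf_add_sub_mul_mgf_le {X Y Y' : Ω → ℝ} {a M : ℝ} (hX : AEMeasurable X μ)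
    (hXa : ∀ᵐ ω ∂μ, |X ω| ≤ a) (hYM : ∀ᵐ ω ∂μ, |Y ω| ≤ M) (hid : IdentDistrib Y' Y μ μ)
    (hind : IndepFun X Y' μ) (t : ℝ) :
    |mgf (X + Y) μ t - mgf X μ t * mgf Y μ t|
      ≤ |t| * exp (|t| * (a + M)) * ∫ ω, |Y ω - Y' ω| ∂μ := by
  have hY := hid.aemeasurable_snd
  have hY' := hid.aemeasurable_fst
  have hY'M : ∀ᵐ ω ∂μ, |Y' ω| ≤ M :=
    hid.symm.ae_snd (measurableSet_le measurable_abs measurable_const) hYM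
  have hXY : ∀ᵐ ω ∂μ, |X ω + Y ω| ≤ a + M := by
    filter_upwards [hXa, hYM] with ω h₁ h₂ using (abs_add_le _ _).trans (add_le_add h₁ h₂)
  have hXY' : ∀ᵐ ω ∂μ, |X ω + Y' ω| ≤ a + M := by
    filter_upwards [hXa, hY'M] with ω h₁ h₂ using (abs_add_le _ _).trans (add_le_add h₁ h₂)
  have hdecouple : mgf X μ t * mgf Y μ t = mgf (X + Y') μ t := by
    rw [mgf_congr_identDistrib hid.symm, hind.mgf_add (aemeasurable_exp_mul t hX)
      (aemeasurable_exp_mul t hY')]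
  have hdiff_int : Integrable (fun ω ↦ |Y ω - Y' ω|) μ := by
    refine Integrable.of_bound (hY.sub hY').abs.aestronglyMeasurable (M + M) ?_
    filter_upwards [hYM, hY'M] with ω h₁ h₂
    rw [norm_eq_abs, abs_abs]
    exact (abs_sub _ _).trans (add_le_add h₁ h₂)
  have hpointwise : ∀ᵐ ω ∂μ, ‖exp (t * (X ω + Y ω)) - exp (t * (X ω + Y' ω))‖
      ≤ |t| * exp (|t| * (a + M)) * |Y ω - Y' ω| := by
    filter_upwards [hXY, hXY'] with ω h₁ h₂
    have hlip := abs_exp_sub_exp_le_of_abs_le (abs_mul_le_abs_mul_of_abs_le (t := t) h₁)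
      (abs_mul_le_abs_mul_of_abs_le (t := t) h₂)
    rw [← mul_sub, abs_mul, add_sub_add_left_eq_sub] at hlip
    rw [norm_eq_abs]
    linarith
  rw [hdecouple, mgf, mgf, ← integral_sub (integrable_exp_mul_of_ae_abs_le (hX.add hY) hXY t)
    (integrable_exp_mul_of_ae_abs_le (hX.add hY') hXY' t), ← integral_const_mul]
  exact norm_integral_le_of_norm_le (hdiff_int.const_mul _) hpointwise

lemma abs_mgf_add_sub_mul_le_of_abs_mgf_sub_le {X Y Y' : Ω → ℝ} {a M P B t : ℝ}
    (hX : AEMeasurable X μ) (hXa : ∀ᵐ ω ∂μ, |X ω| ≤ a) (hYM : ∀ᵐ ω ∂μ, |Y ω| ≤ M)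
    (hid : IdentDistrib Y' Y μ μ) (hind : IndepFun X Y' μ) (hprev : |mgf X μ t - P| ≤ B) :
    |mgf (X + Y) μ t - P * mgf Y μ t|
      ≤ |t| * exp (|t| * (a + M)) * ∫ ω, |Y ω - Y' ω| ∂μ + B * exp (|t| * M) := by
  calc |mgf (X + Y) μ t - P * mgf Y μ t|
      = |(mgf (X + Y) μ t - mgf X μ t * mgf Y μ t) + (mgf X μ t - P) * mgf Y μ t| := by ring_nf
    _ ≤ |mgf (X + Y) μ t - mgf X μ t * mgf Y μ t| + |mgf X μ t - P| * |mgf Y μ t| :=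
      (abs_add_le _ _).trans_eq (by rw [abs_mul])
    _ ≤ _ := add_le_add (abs_mgf_add_sub_mul_mgf_le hX hXa hYM hid hind t)
      (mul_le_mul hprev (abs_mgf_le_of_ae_abs_le hYM t) (abs_nonneg _)
        ((abs_nonneg _).trans hprev))

theorem abs_mgf_sum_Icc_sub_prod_mgf_le {Y Y' : ℕ → Ω → ℝ} {M t : ℝ} {p : ℕ}
    (hY : ∀ i, AEMeasurable (Y i) μ) (hbd : ∀ i ∈ Icc 1 p, ∀ᵐ ω ∂μ, |Y i ω| ≤ M)
    (hid : ∀ i ∈ Icc 2 p, IdentDistrib (Y' i) (Y i) μ μ)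
    (hind : ∀ i ∈ Icc 2 p, IndepFun (fun ω ↦ ∑ j ∈ Icc 1 (i - 1), Y j ω) (Y' i) μ) :
    |mgf (fun ω ↦ ∑ i ∈ Icc 1 p, Y i ω) μ t - ∏ i ∈ Icc 1 p, mgf (Y i) μ t|
      ≤ |t| * exp (|t| * M * p) * ∑ i ∈ Icc 2 p, ∫ ω, |Y i ω - Y' i ω| ∂μ := by
  induction p with
  | zero => simp
  | succ n ih =>
    rcases Nat.eq_zero_or_pos n with rfl | hn
    · simp [mgf]
    have hsub {k : ℕ} : Icc k n ⊆ Icc k (n + 1) := Icc_subset_Icc le_rfl (Nat.le_succ n)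
    have hprev := ih (fun i hi ↦ hbd i (hsub hi)) (fun i hi ↦ hid i (hsub hi))
      (fun i hi ↦ hind i (hsub hi))
    have hlast : n + 1 ∈ Icc 2 (n + 1) := mem_Icc.2 ⟨by omega, le_rfl⟩
    have hYM := hbd (n + 1) (Icc_subset_Icc_left (by norm_num) hlast)
    have hSM : ∀ᵐ ω ∂μ, |∑ i ∈ Icc 1 n, Y i ω| ≤ n * M := by
      simpa using ae_abs_sum_le (fun i hi ↦ hbd i (hsub hi))
    have hrec := abs_mgf_add_sub_mul_le_of_abs_mgf_sub_le
      (Finset.aemeasurable_fun_sum _ fun i _ ↦ hY i) hSM hYM (hid (n + 1) hlast)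
      (by simpa using hind (n + 1) hlast) hprev
    have hsplit : (fun ω ↦ ∑ i ∈ Icc 1 (n + 1), Y i ω)
        = (fun ω ↦ ∑ i ∈ Icc 1 n, Y i ω) + Y (n + 1) :=
      funext fun ω ↦ sum_Icc_succ_top (by omega) _
    have hexp : exp (|t| * (n * M + M)) = exp (|t| * M * ↑(n + 1)) := by push_cast; ring_nf
    have hexp' : exp (|t| * M * n) * exp (|t| * M) = exp (|t| * M * ↑(n + 1)) := by
      rw [← exp_add]; push_cast; ring_nf
    rw [hsplit, prod_Icc_succ_top (by omega), sum_Icc_succ_top (by omega : 2 ≤ n + 1)]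
    exact hrec.trans_eq (by rw [hexp, ← hexp']; ring)

end

theorem stmt14_general {Ω : Type*} [MeasurableSpace Ω] {μ : Measure Ω} [IsProbabilityMeasure μ]
    (p : ℕ) (Y Ystar : ℕ → Ω → ℝ) (M : ℝ)
    (hmeas : ∀ i, Measurable (Y i)) (hmeas' : ∀ i, Measurable (Ystar i))
    (hbd : ∀ i ∈ Icc 1 p, ∀ᵐ ω ∂μ, |Y i ω| ≤ M)
    (hdist : ∀ i ∈ Icc 2 p, Measure.map (Ystar i) μ = Measure.map (Y i) μ)
    (hindep : ∀ i ∈ Icc 2 p,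
      Indep (⨆ j ∈ Icc 1 (i - 1), MeasurableSpace.comap (Y j) inferInstance)
        (MeasurableSpace.comap (Ystar i) inferInstance) μ)
    (t : ℝ) :
    |(∫ ω, exp (t * ∑ i ∈ Icc 1 p, Y i ω) ∂μ) -
        ∏ i ∈ Icc 1 p, ∫ ω, exp (t * Y i ω) ∂μ|
      ≤ |t| * exp (|t| * M * p) * ∑ i ∈ Icc 2 p, ∫ ω, |Y i ω - Ystar i ω| ∂μ :=
  abs_mgf_sum_Icc_sub_prod_mgf_le (fun i ↦ (hmeas i).aemeasurable) hbd
    (fun i hi ↦ ⟨(hmeas' i).aemeasurable, (hmeas i).aemeasurable, hdist i hi⟩)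
    (fun i hi ↦ indepFun_sum_of_indep_iSup (hindep i hi))

theorem stmt14 {Ω : Type*} [MeasurableSpace Ω] {μ : Measure Ω} [IsProbabilityMeasure μ]
    (p : ℕ) (Y Ystar : ℕ → Ω → ℝ) (M : ℝ) (hM : 0 < M)
    (hmeas : ∀ i, Measurable (Y i)) (hmeas' : ∀ i, Measurable (Ystar i))
    (hbd : ∀ i ∈ Icc 1 p, ∀ᵐ ω ∂μ, |Y i ω| ≤ M)
    (hdist : ∀ i ∈ Icc 2 p, Measure.map (Ystar i) μ = Measure.map (Y i) μ)
    (hindep : ∀ i ∈ Icc 2 p,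
      Indep (⨆ j ∈ Icc 1 (i - 1), MeasurableSpace.comap (Y j) inferInstance)
        (MeasurableSpace.comap (Ystar i) inferInstance) μ)
    (t : ℝ) :
    |(∫ ω, exp (t * ∑ i ∈ Icc 1 p, Y i ω) ∂μ) -
        ∏ i ∈ Icc 1 p, ∫ ω, exp (t * Y i ω) ∂μ|
      ≤ |t| * exp (|t| * M * p) * ∑ i ∈ Icc 2 p, ∫ ω, |Y i ω - Ystar i ω| ∂μ :=
  stmt14_general p Y Ystar M hmeas hmeas' hbd hdist hindep t
end

section
/- Let (X_k)_{k∈ℤ} be real random variables with second moments such that Σ_{k>0} k |Cov(X_0, X_k)| < ∞, second order stationary (Cov(X_i, X_j) depends only on i−j), and set S_n = X_1 + ⋯ + X_n, σ_n² = Var(S_n). If σ_n² → ∞ as n → ∞, then σ_n²/n converges to a finite positive limit σ² = Var(X_0) + 2 Σ_{k>0} Cov(X_0, X_k). -/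
/-!
With `c k = Cov(X₀, X_k)`, stationarity gives the recursion
`σ_{n+1}² = σ_n² + c 0 + 2 ∑_{k<n} c (k+1)`, which solves to
`σ_n² = n σ² - 2 (∑_{k<n} (k+1) c (k+1) + n ∑_{k≥n} c (k+1))`.
The bracket is bounded by `∑ (k+1) |c (k+1)|`, so `σ_n² = n σ² + O(1)`:
hence `σ_n²/n → σ²`, and `σ_n² → ∞` forces `σ² > 0`.
-/

open MeasureTheory ProbabilityTheory Filter Finset

section LinearGrowth

variable {v : ℕ → ℝ} {σ C : ℝ}

lemma tendsto_div_natCast_of_abs_sub_mul_le (h : ∀ n : ℕ, |v n - n * σ| ≤ C) :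
    Tendsto (fun n : ℕ => v n / n) atTop (nhds σ) := by
  rw [tendsto_iff_norm_sub_tendsto_zero]
  refine squeeze_zero' (.of_forall fun n => norm_nonneg _) ?_
    (tendsto_const_div_atTop_nhds_zero_nat C)
  filter_upwards [eventually_gt_atTop 0] with n hn
  have hn' : (0 : ℝ) < n := by exact_mod_cast hn
  rw [Real.norm_eq_abs, show v n / n - σ = (v n - n * σ) / n by field_simp,
    abs_div, Nat.abs_cast]
  exact div_le_div_of_nonneg_right (h n) hn'.le

lemma pos_of_abs_sub_mul_le_of_tendsto_atTop (h : ∀ n : ℕ, |v n - n * σ| ≤ C)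
    (hv : Tendsto v atTop atTop) : 0 < σ := by
  by_contra! hσ
  obtain ⟨n, hn⟩ := (hv.eventually_gt_atTop C).exists
  have := (le_abs_self _).trans (h n)
  nlinarith [mul_nonpos_of_nonneg_of_nonpos (Nat.cast_nonneg (α := ℝ) n) hσ]

end LinearGrowth

section WeightedSummable

variable {a : ℕ → ℝ}

lemma abs_sum_range_add_mul_tsum_le (ha : Summable fun k : ℕ => ((k : ℝ) + 1) * |a k|)
    (n : ℕ) :
    |∑ k ∈ range n, ((k : ℝ) + 1) * a k + n * ∑' k, a (k + n)|
      ≤ ∑' k : ℕ, ((k : ℝ) + 1) * |a k| := by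
  have ha_tail := (summable_nat_add_iff n).2 ha
  have habs : Summable fun k => |a (k + n)| :=
    ha_tail.of_nonneg_of_le (fun _ => abs_nonneg _) fun k =>
      le_mul_of_one_le_left (abs_nonneg _)
        (by push_cast; linarith [(k + n).cast_nonneg (α := ℝ)])
  have hhead :
      |∑ k ∈ range n, ((k : ℝ) + 1) * a k| ≤ ∑ k ∈ range n, ((k : ℝ) + 1) * |a k| :=
    (abs_sum_le_sum_abs _ _).trans_eq (sum_congr rfl fun k _ => by
      rw [abs_mul, abs_of_pos (by positivity : (0 : ℝ) < k + 1)])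
  have htail :
      |(n : ℝ) * ∑' k, a (k + n)| ≤ ∑' k, (((k + n : ℕ) : ℝ) + 1) * |a (k + n)| := by
    have hle : |∑' k, a (k + n)| ≤ ∑' k, |a (k + n)| := by
      simpa only [Real.norm_eq_abs] using norm_tsum_le_tsum_norm (f := fun k => a (k + n)) habs
    calc |(n : ℝ) * ∑' k, a (k + n)| ≤ ∑' k, (n : ℝ) * |a (k + n)| := by
          rw [abs_mul, Nat.abs_cast, tsum_mul_left]
          exact mul_le_mul_of_nonneg_left hle n.cast_nonneg
      _ ≤ _ := (habs.mul_left (n : ℝ)).tsum_le_tsum (fun k => mul_le_mul_of_nonneg_right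
          (by push_cast; linarith [Nat.cast_nonneg (α := ℝ) k]) (abs_nonneg _)) ha_tail
  rw [← ha.sum_add_tsum_nat_add n]
  exact (abs_add_le _ _).trans (add_le_add hhead htail)

variable {v : ℕ → ℝ} {c₀ : ℝ}

lemma eq_mul_sub_of_add_sum_range (ha : Summable a) (h0 : v 0 = 0)
    (hrec : ∀ n, v (n + 1) = v n + (c₀ + 2 * ∑ k ∈ range n, a k)) (n : ℕ) :
    v n = n * (c₀ + 2 * ∑' k, a k)
      - 2 * (∑ k ∈ range n, ((k : ℝ) + 1) * a k + n * ∑' k, a (k + n)) := by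
  induction n with
  | zero => simp [h0]
  | succ n ih =>
    have hsplit := ha.sum_add_tsum_nat_add n
    have hshift : ∑' k, a (k + n) = a n + ∑' k, a (k + (n + 1)) := by
      rw [((summable_nat_add_iff n).2 ha).tsum_eq_zero_add]
      simp only [zero_add, add_right_comm _ 1 n, add_assoc]
    rw [hrec, ih, sum_range_succ]
    push_cast
    linear_combination 2 * hsplit - 2 * (n + 1 : ℝ) * hshift

lemma pos_and_tendsto_div_of_add_sum_range (ha : Summable fun k : ℕ => ((k : ℝ) + 1) * |a k|)
    (h0 : v 0 = 0) (hrec : ∀ n, v (n + 1) = v n + (c₀ + 2 * ∑ k ∈ range n, a k))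
    (hv : Tendsto v atTop atTop) :
    0 < c₀ + 2 * ∑' k, a k ∧
      Tendsto (fun n : ℕ => v n / n) atTop (nhds (c₀ + 2 * ∑' k, a k)) := by
  have hsumm : Summable a := (ha.of_norm_bounded fun k => by
    rw [Real.norm_eq_abs]; exact le_mul_of_one_le_left (abs_nonneg _)
      (by linarith [Nat.cast_nonneg (α := ℝ) k]))
  have hbound (n : ℕ) :
      |v n - n * (c₀ + 2 * ∑' k, a k)| ≤ 2 * ∑' k : ℕ, ((k : ℝ) + 1) * |a k| := by
    rw [eq_mul_sub_of_add_sum_range hsumm h0 hrec n, sub_sub_cancel_left, abs_neg, abs_mul,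
      abs_two]
    exact mul_le_mul_of_nonneg_left (abs_sum_range_add_mul_tsum_le ha n) zero_le_two
  exact ⟨pos_of_abs_sub_mul_le_of_tendsto_atTop hbound hv,
    tendsto_div_natCast_of_abs_sub_mul_le hbound⟩

end WeightedSummable

lemma sum_Icc_one_natCast_eq_sum_range {M : Type*} [AddCommMonoid M] (f : ℤ → M) (n : ℕ) :
    ∑ i ∈ Icc (1 : ℤ) n, f i = ∑ k ∈ range n, f (k + 1) := by
  rw [Int.Icc_eq_finset_map, sum_map]
  simp [add_comm]

section Stationary

variable {Ω : Type*} [MeasurableSpace Ω] {μ : Measure Ω} [IsFiniteMeasure μ]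
  {Y : ℕ → Ω → ℝ}

lemma variance_sum_range_succ (hY : ∀ k, MemLp (Y k) 2 μ) (n : ℕ) :
    Var[fun ω => ∑ k ∈ range (n + 1), Y k ω; μ]
      = Var[fun ω => ∑ k ∈ range n, Y k ω; μ] + 2 * ∑ k ∈ range n, cov[Y k, Y n; μ]
        + Var[Y n; μ] := by
  simp only [sum_range_succ]
  rw [variance_fun_add (memLp_finsetSum _ fun k _ => hY k) (hY n),
    covariance_fun_sum_left' (fun k _ => hY k) (hY n)]

lemma variance_sum_range_succ_of_stationary (hY : ∀ k, MemLp (Y k) 2 μ) {c : ℕ → ℝ}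
    (hc : ∀ i k, cov[Y i, Y (i + k); μ] = c k) (n : ℕ) :
    Var[fun ω => ∑ k ∈ range (n + 1), Y k ω; μ]
      = Var[fun ω => ∑ k ∈ range n, Y k ω; μ]
        + (c 0 + 2 * ∑ k ∈ range n, c (k + 1)) := by
  have hcross : ∑ k ∈ range n, cov[Y k, Y n; μ] = ∑ k ∈ range n, c (k + 1) := by
    rw [← sum_range_reflect]
    refine sum_congr rfl fun k hk => ?_
    have hkn := mem_range.1 hk
    rw [← hc, show n - 1 - k + (k + 1) = n by omega]
  rw [variance_sum_range_succ hY, hcross, ← covariance_self (hY n).aemeasurable, ← hc n 0,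
    add_zero]
  ring

end Stationary

theorem stmt18 {Ω : Type*} [MeasurableSpace Ω] {μ : Measure Ω} [IsProbabilityMeasure μ]
    (X : ℤ → Ω → ℝ) (hL2 : ∀ i, MemLp (X i) 2 μ)
    (cov : ℤ → ℤ → ℝ)
    (hcov : ∀ i j, cov i j =
      ∫ ω, (X i ω - ∫ ω', X i ω' ∂μ) * (X j ω - ∫ ω', X j ω' ∂μ) ∂μ)
    (hstat : ∀ i k : ℤ, cov i (i + k) = cov 0 k)
    (hsumm : Summable (fun k : ℕ => ((k : ℝ) + 1) * |cov 0 ((k : ℤ) + 1)|))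
    (hvar : Tendsto (fun n : ℕ =>
        variance (fun ω => ∑ i ∈ Finset.Icc 1 (n : ℤ), X i ω) μ) atTop atTop) :
    0 < cov 0 0 + 2 * ∑' k : ℕ, cov 0 ((k : ℤ) + 1) ∧
    Tendsto (fun n : ℕ =>
        variance (fun ω => ∑ i ∈ Finset.Icc 1 (n : ℤ), X i ω) μ / n)
      atTop (nhds (cov 0 0 + 2 * ∑' k : ℕ, cov 0 ((k : ℤ) + 1))) := by
  set Y : ℕ → Ω → ℝ := fun k => X (k + 1)
  have hstatY (i k : ℕ) : cov[Y i, Y (i + k); μ] = cov 0 k := by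
    show cov[X (i + 1), X ((i + k : ℕ) + 1); μ] = _
    rw [← hstat (i + 1) k, hcov, show ((i + k : ℕ) : ℤ) + 1 = i + 1 + k by push_cast; ring]
    rfl
  have hpartial (n : ℕ) :
      (fun ω => ∑ i ∈ Icc 1 (n : ℤ), X i ω) = fun ω => ∑ k ∈ range n, Y k ω :=
    funext fun ω => sum_Icc_one_natCast_eq_sum_range _ n
  simp only [hpartial] at hvar ⊢
  refine pos_and_tendsto_div_of_add_sum_range hsumm (variance_zero μ) (fun n => ?_) hvar
  simpa using variance_sum_range_succ_of_stationary (fun k => hL2 _) hstatY n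
end
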